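/- arXiv:1408.5215 — 2 statements merged into one kernel-verified Lean document; each statement's English description precedes it below -/
import Mathlib

section
/- Let A be an abelian group and (F, Ω) an abelian 3-cocycle with values in ℂˣ (satisfying the pentagon identity and the two hexagon identities). Then the trace Q(i) := Ω(i,i) satisfies the cube identity Q(i+j+k)·Q(i)·Q(j)·Q(k) = Q(i+j)·Q(i+k)·Q(j+k) for all i,j,k ∈ A; that is, Q is a ℂˣ-valued quadratic form on A. -/
/-!
Polarize the trace `Q i = Ω i i` through `B i j = Ω i j + Ω j i`. Solving the two hexagons for
`Ω i (j + k)` and `Ω (i + j) k` shows that `B` is additive in each argument (the associator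
terms cancel in pairs), and the pentagon at `(i, j, i, j)` gives `Q (i + j) = Q i + Q j + B i j`.
A function whose polarization is additive satisfies the cube identity.
We work with cochains valued in an additive abelian group, and apply this to `Additive ℂˣ`.
-/

structure IsAbelianThreeCocycle {A M : Type*} [AddCommGroup A] [AddCommGroup M]
    (F : A → A → A → M) (Ω : A → A → M) : Prop where
  pentagon : ∀ i j k l : A,
    F i j k + F i (j + k) l + F j k l = F (i + j) k l + F i j (k + l)
  hexagon₁ : ∀ i j k : A,
    -F i j k + Ω i (j + k) + -F j k i = Ω i j + -F j i k + Ω i k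
  hexagon₂ : ∀ i j k : A,
    F i j k + Ω (i + j) k + F k i j = Ω j k + F i k j + Ω i k

namespace IsAbelianThreeCocycle

variable {A M : Type*} [AddCommGroup A] [AddCommGroup M]
  {F : A → A → A → M} {Ω : A → A → M}

theorem braiding_add_right (h : IsAbelianThreeCocycle F Ω) (i j k : A) :
    Ω i (j + k) = Ω i j + Ω i k + F i j k + F j k i - F j i k := by
  linear_combination (norm := abel) h.hexagon₁ i j k

theorem braiding_add_left (h : IsAbelianThreeCocycle F Ω) (i j k : A) :
    Ω (i + j) k = Ω i k + Ω j k + F i k j - F i j k - F k i j := by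
  linear_combination (norm := abel) h.hexagon₂ i j k

theorem braiding_add_braiding_swap_add_left (h : IsAbelianThreeCocycle F Ω) (i j k : A) :
    Ω (i + j) k + Ω k (i + j) = (Ω i k + Ω k i) + (Ω j k + Ω k j) := by
  rw [h.braiding_add_left, h.braiding_add_right]
  abel

theorem trace_add (h : IsAbelianThreeCocycle F Ω) (i j : A) :
    Ω (i + j) (i + j) = Ω i i + Ω j j + (Ω i j + Ω j i) := by
  have pentagon := h.pentagon i j i j
  rw [add_comm j i] at pentagon
  rw [h.braiding_add_left i j (i + j), h.braiding_add_right i i j, h.braiding_add_right j i j]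
  linear_combination (norm := abel) pentagon

theorem trace_cube (h : IsAbelianThreeCocycle F Ω) (i j k : A) :
    Ω (i + j + k) (i + j + k) + Ω i i + Ω j j + Ω k k =
      Ω (i + j) (i + j) + Ω (i + k) (i + k) + Ω (j + k) (j + k) := by
  rw [h.trace_add (i + j) k, h.braiding_add_braiding_swap_add_left, h.trace_add i k,
    h.trace_add j k]
  abel

end IsAbelianThreeCocycle

/-- The trace Q(i) = Ω(i,i) of an abelian 3-cocycle (F,Ω)
satisfies the cube identity, i.e. it is a ℂˣ-valued quadratic form. -/
theorem abelian_three_cocycle_trace_cube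
    {A : Type*} [AddCommGroup A] (F : A → A → A → ℂˣ) (Ω : A → A → ℂˣ)
    (pentagon : ∀ i j k l : A,
      F i j k * F i (j + k) l * F j k l = F (i + j) k l * F i j (k + l))
    (hexagon1 : ∀ i j k : A,
      (F i j k)⁻¹ * Ω i (j + k) * (F j k i)⁻¹ = Ω i j * (F j i k)⁻¹ * Ω i k)
    (hexagon2 : ∀ i j k : A,
      F i j k * Ω (i + j) k * F k i j = Ω j k * F i k j * Ω i k) :
    ∀ i j k : A,
      Ω (i + j + k) (i + j + k) * Ω i i * Ω j j * Ω k k =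
        Ω (i + j) (i + j) * Ω (i + k) (i + k) * Ω (j + k) (j + k) := by
  have cocycle : IsAbelianThreeCocycle (fun i j k ↦ Additive.ofMul (F i j k))
      (fun i j ↦ Additive.ofMul (Ω i j)) :=
    ⟨fun i j k l ↦ by simpa only [ofMul_mul] using congrArg Additive.ofMul (pentagon i j k l),
      fun i j k ↦ by
        simpa only [ofMul_mul, ofMul_inv] using congrArg Additive.ofMul (hexagon1 i j k),
      fun i j k ↦ by simpa only [ofMul_mul] using congrArg Additive.ofMul (hexagon2 i j k)⟩
  intro i j k
  simpa only [← ofMul_mul, EmbeddingLike.apply_eq_iff_eq] using cocycle.trace_cube i j k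
end

section
/- Let M₁, M₂ be ℂ-vector spaces, L(-1) an operator on M₂, and I_z : M₁ ⊗ M₁ → M₂((z)) a nonzero linear map with I_z = c·I*_z where I*_z(v⊗u) = e^{zL(-1)}I_{-z}(u⊗v) and c ∈ {±1}. Suppose there exists u ∈ M₁ with I_z(u⊗u) ≠ 0, and let n be the order of the lowest nonzero coefficient of I_z(u⊗u). Then c = (-1)^n. In particular, if n is even then c = 1, and if n is odd then c = -1. -/
/-!
Compare the order-`n` coefficients of the two sides of `I_z(u ⊗ u) = c · e^{zL(-1)} I_{-z}(u ⊗ u)`.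
Since `I_z(u ⊗ u)` has no coefficients below `z^n`, every term `L(-1)^k/k!` with `k ≥ 1` of the
exponential contributes nothing there, so the lowest coefficient `x ≠ 0` satisfies
`x = c · (-1)^n · x`. Hence `c · (-1)^n = 1`, i.e. `c = (-1)^n`.
-/

open Finset

theorem Finset.sum_range_sub_eq_of_forall_lt {M : Type*} [AddCommMonoid M] (g : ℕ → ℤ → M)
    (n : ℤ) (hg : ∀ k m, m < n → g k m = 0) (N : ℕ) :
    ∑ k ∈ range (N + 1), g k (n - k) = g 0 n := by
  rw [sum_range_succ', sum_eq_zero fun k _ => hg _ _ (by omega)]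
  simp

theorem eq_of_eq_smul_smul_self {K M : Type*} [Field K] [AddCommGroup M] [Module K M]
    {c ε : K} (hε : ε * ε = 1) {x : M} (hx : x ≠ 0) (h : x = c • ε • x) : c = ε := by
  have hcε : c * ε = 1 := by
    have : (c * ε - 1) • x = 0 := by rw [sub_smul, one_smul, mul_smul, ← h, sub_self]
    exact sub_eq_zero.mp ((smul_eq_zero.mp this).resolve_right hx)
  calc c = c * (ε * ε) := by rw [hε, mul_one]
    _ = ε := by rw [← mul_assoc, hcε, one_mul]

theorem sign_determined_by_order_general
    {M₁ M₂ : Type*} [AddCommGroup M₁] [Module ℂ M₁]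
    [AddCommGroup M₂] [Module ℂ M₂]
    (L : M₂ →ₗ[ℂ] M₂)
    (I : M₁ →ₗ[ℂ] M₁ →ₗ[ℂ] (ℤ → M₂))
    (r : M₁ → M₁ → ℤ)
    (c : ℂ)
    (hskew : ∀ (u v : M₁) (n : ℤ),
      I v u n = c •
        ∑ k ∈ Finset.range ((n - r u v).toNat + 1),
          ((-1 : ℂ) ^ (n - (k : ℤ))) •
            (((k.factorial : ℂ)⁻¹) • (L ^ k) (I u v (n - (k : ℤ)))))
    (u : M₁) (n : ℤ)
    (hn : I u u n ≠ 0) (hmin : ∀ m : ℤ, m < n → I u u m = 0) :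
    c = (-1 : ℂ) ^ n := by
  have hlowest := hskew u u n
  rw [sum_range_sub_eq_of_forall_lt
    (fun k m => ((-1 : ℂ) ^ m) • (((k.factorial : ℂ)⁻¹) • (L ^ k) (I u u m))) n
    (fun k m hm => by simp [hmin m hm])] at hlowest
  simp only [Nat.factorial_zero, Nat.cast_one, inv_one, one_smul, pow_zero,
    Module.End.one_apply] at hlowest
  exact eq_of_eq_smul_smul_self (by rw [← mul_zpow]; norm_num) hn hlowest

/-- If I = c · I* with c ∈ {±1}, and I(u⊗u) is nonzero with
order n (lowest nonzero coefficient at z^n), then c = (-1)^n. -/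
theorem sign_determined_by_order
    {M₁ M₂ : Type*} [AddCommGroup M₁] [Module ℂ M₁]
    [AddCommGroup M₂] [Module ℂ M₂]
    (L : M₂ →ₗ[ℂ] M₂)
    (I : M₁ →ₗ[ℂ] M₁ →ₗ[ℂ] (ℤ → M₂))
    (r : M₁ → M₁ → ℤ)
    (hlaurent : ∀ (u v : M₁) (n : ℤ), n < r u v → I u v n = 0)
    (c : ℂ) (hc : c = 1 ∨ c = -1)
    (hskew : ∀ (u v : M₁) (n : ℤ),
      I v u n = c •
        ∑ k ∈ Finset.range ((n - r u v).toNat + 1),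
          ((-1 : ℂ) ^ (n - (k : ℤ))) •
            (((k.factorial : ℂ)⁻¹) • (L ^ k) (I u v (n - (k : ℤ)))))
    (u : M₁) (n : ℤ)
    (hn : I u u n ≠ 0) (hmin : ∀ m : ℤ, m < n → I u u m = 0) :
    c = (-1 : ℂ) ^ n :=
  sign_determined_by_order_general L I r c hskew u n hn hmin
end
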